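/- arXiv:alg-geom/9401003 — 2 statements merged into one kernel-verified Lean document; each statement's English description precedes it below -/
import Mathlib

section
/- Γ_{1,p} is a normal subgroup of Γ⁰_{1,p}, and the quotient group Γ⁰_{1,p}/Γ_{1,p} is isomorphic to SL(2, F_p), the group of 2×2 matrices of determinant 1 over the field with p elements. -/
open Matrix

/-- The standard symplectic form `J` on `ℚ⁴`. -/
def J4 : Matrix (Fin 4) (Fin 4) ℚ :=
  !![0,0,1,0; 0,0,0,1; -1,0,0,0; 0,-1,0,0]

/-- Membership in `Sp(4,ℚ)`: `γ J γᵀ = J`. -/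
def IsSp4 (γ : Matrix (Fin 4) (Fin 4) ℚ) : Prop := γ * J4 * γ.transpose = J4

/-- A rational number is an integer. -/
def IsIntegerEntry (x : ℚ) : Prop := ∃ n : ℤ, x = n

/-- Membership in `Γ_{1,p} ⊆ Sp(4,ℤ)`:  `γ - 1` lies in the pattern
`[[ℤ,ℤ,ℤ,pℤ],[pℤ,pℤ,pℤ,p²ℤ],[ℤ,ℤ,ℤ,pℤ],[ℤ,ℤ,ℤ,pℤ]]`. -/
def Gamma1pMem (p : ℕ) (γ : Matrix (Fin 4) (Fin 4) ℚ) : Prop :=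
  IsSp4 γ ∧ (∀ i j, IsIntegerEntry (γ i j)) ∧
  (∃ n : ℤ, (γ - 1) 0 3 = p * n) ∧
  (∃ n : ℤ, (γ - 1) 1 0 = p * n) ∧
  (∃ n : ℤ, (γ - 1) 1 1 = p * n) ∧
  (∃ n : ℤ, (γ - 1) 1 2 = p * n) ∧
  (∃ n : ℤ, (γ - 1) 1 3 = (p : ℚ)^2 * n) ∧
  (∃ n : ℤ, (γ - 1) 2 3 = p * n) ∧
  (∃ n : ℤ, (γ - 1) 3 3 = p * n)

/-- Membership in `Γ⁰_{1,p} ⊆ Sp(4,ℚ)`: entries lie in the pattern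
`[[ℤ,ℤ,ℤ,pℤ],[pℤ,ℤ,pℤ,pℤ],[ℤ,ℤ,ℤ,pℤ],[ℤ,(1/p)ℤ,ℤ,ℤ]]`. -/
def Gamma0pMem (p : ℕ) (γ : Matrix (Fin 4) (Fin 4) ℚ) : Prop :=
  IsSp4 γ ∧ (∀ i j : Fin 4, (i, j) ≠ (3, 1) → IsIntegerEntry (γ i j)) ∧
  (∃ n : ℤ, γ 0 3 = p * n) ∧
  (∃ n : ℤ, γ 1 0 = p * n) ∧
  (∃ n : ℤ, γ 1 2 = p * n) ∧
  (∃ n : ℤ, γ 1 3 = p * n) ∧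
  (∃ n : ℤ, γ 2 3 = p * n) ∧
  (∃ n : ℤ, γ 3 1 = (n : ℚ) / p)

/-!
Write `p^k ℤ` for the rationals of the form `p ^ k * n`, `k ∈ ℤ`, `n ∈ ℤ`. Both groups are cut out
of `Sp(4, ℚ)` by entrywise conditions `γ i j ∈ p^(w i j) ℤ`, for the exponent patterns `gamma0Exp`
and `gamma1Exp`. Since `w i j ≤ w i k + w k j`, the `Γ⁰_{1,p}` conditions are stable under products,
and since `w` is invariant under the transposition induced by `J` (a signed permutation matrix
swapping the two Lagrangian halves), they are stable under `γ⁻¹ = -J γᵀ J`.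

The reduction map takes the `p`-adic leading digits `γ i j / p ^ (w i j) mod p` on the block
`i, j ∈ {1, 3}`, i.e. `[[γ₁₁, γ₁₃/p], [p γ₃₁, γ₃₃]] mod p`. It is multiplicative because `w` is
additive on that block and strictly subadditive through the indices `0, 2`, whose contributions
vanish mod `p`; its determinant is `1` by the `(1, 3)` entry of `γ J γᵀ = J`; and its kernel is
`Γ_{1,p}` because `gamma1Exp` exceeds `gamma0Exp` by one exactly on the block. It is onto because
the elementary matrices generating `SL(2, 𝔽_p)` lift to the transvections `1 + p b E₁₃` and
`1 + (c / p) E₃₁`, which lie in `Γ⁰_{1,p}`.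
-/

section Symplectic

variable {γ δ A : Matrix (Fin 4) (Fin 4) ℚ}

lemma IsSp4.mul (hγ : IsSp4 γ) (hδ : IsSp4 δ) : IsSp4 (γ * δ) := by
  unfold IsSp4 at *
  rw [transpose_mul, show γ * δ * J4 * (δᵀ * γᵀ) = γ * (δ * J4 * δᵀ) * γᵀ by noncomm_ring, hδ, hγ]

lemma isSp4_one : IsSp4 1 := by simp [IsSp4]

lemma IsSp4.of_mul_eq_one (hγ : IsSp4 γ) (h : A * γ = 1) : IsSp4 A :=
  calc A * J4 * Aᵀ = A * (γ * J4 * γᵀ) * Aᵀ := by rw [hγ]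
    _ = (A * γ) * J4 * (A * γ)ᵀ := by rw [transpose_mul]; noncomm_ring
    _ = J4 := by rw [h]; simp

lemma J4_mul_J4 : J4 * J4 = -1 := by
  ext i j
  fin_cases i <;> fin_cases j <;> simp [J4, mul_apply, Fin.sum_univ_four]

def sp4Inv (γ : Matrix (Fin 4) (Fin 4) ℚ) : Matrix (Fin 4) (Fin 4) ℚ := -(J4 * γᵀ * J4)

lemma IsSp4.mul_sp4Inv (hγ : IsSp4 γ) : γ * sp4Inv γ = 1 := by
  rw [sp4Inv, show γ * -(J4 * γᵀ * J4) = -(γ * J4 * γᵀ * J4) by noncomm_ring, hγ, J4_mul_J4,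
    neg_neg]

lemma IsSp4.sp4Inv_mul (hγ : IsSp4 γ) : sp4Inv γ * γ = 1 := mul_eq_one_comm.1 hγ.mul_sp4Inv

lemma isSp4_sp4Inv (hγ : IsSp4 γ) : IsSp4 (sp4Inv γ) := hγ.of_mul_eq_one hγ.sp4Inv_mul

def IsSp4.toGL (hγ : IsSp4 γ) : GL (Fin 4) ℚ := ⟨γ, sp4Inv γ, hγ.mul_sp4Inv, hγ.sp4Inv_mul⟩

lemma coe_inv_eq_sp4Inv {g : GL (Fin 4) ℚ} (hg : IsSp4 g) :
    ((g⁻¹ : GL (Fin 4) ℚ) : Matrix (Fin 4) (Fin 4) ℚ) = sp4Inv g :=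
  Units.inv_eq_of_mul_eq_one_right hg.mul_sp4Inv

def lagrangianSwap : Fin 4 → Fin 4 := ![2, 3, 0, 1]

def sp4Sign : Fin 4 → ℤ := ![1, 1, -1, -1]

lemma sp4Inv_apply (γ : Matrix (Fin 4) (Fin 4) ℚ) (i j : Fin 4) :
    sp4Inv γ i j = (sp4Sign i * sp4Sign j : ℤ) * γ (lagrangianSwap j) (lagrangianSwap i) := by
  fin_cases i <;> fin_cases j <;>
    simp [sp4Inv, J4, sp4Sign, lagrangianSwap, vecMul, dotProduct, mul_apply, Fin.sum_univ_four]

end Symplectic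

namespace Matrix.SpecialLinearGroup

variable {F : Type*} [Field F]

lemma fin_two_det_eq (M : SpecialLinearGroup (Fin 2) F) : M 0 0 * M 1 1 - M 0 1 * M 1 0 = 1 := by
  rw [← det_fin_two]
  exact M.det_coe

lemma fin_two_eq_transvection_mul_transvection_mul_transvection (M : SpecialLinearGroup (Fin 2) F)
    (hc : M 1 0 ≠ 0) :
    M = transvection zero_ne_one ((M 0 0 - 1) / M 1 0) * transvection one_ne_zero (M 1 0) *
      transvection zero_ne_one ((M 1 1 - 1) / M 1 0) := by
  have hb : M 0 1 = (M 0 0 * M 1 1 - 1) / M 1 0 := by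
    rw [eq_div_iff hc]
    linear_combination -M.fin_two_det_eq
  ext i j
  fin_cases i <;> fin_cases j <;>
    simp [transvection_coe, mul_apply, Fin.sum_univ_two, one_apply, single_apply, hb] <;>
    field_simp <;> ring

lemma fin_two_mem_of_transvection_mem {H : Subgroup (SpecialLinearGroup (Fin 2) F)}
    (h01 : ∀ x, transvection zero_ne_one x ∈ H) (h10 : ∀ x, transvection one_ne_zero x ∈ H)
    (M : SpecialLinearGroup (Fin 2) F) : M ∈ H := by
  have key (N : SpecialLinearGroup (Fin 2) F) (hN : N 1 0 ≠ 0) : N ∈ H := by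
    rw [fin_two_eq_transvection_mul_transvection_mul_transvection N hN]
    exact mul_mem (mul_mem (h01 _) (h10 _)) (h01 _)
  by_cases hc : M 1 0 = 0
  · have hd : M 1 1 ≠ 0 := fun hd => by simpa [hc, hd] using M.fin_two_det_eq
    replace hd : (M * transvection one_ne_zero 1 : SpecialLinearGroup (Fin 2) F) 1 0 ≠ 0 := by
      simpa [transvection_coe, mul_apply, Fin.sum_univ_two, hc] using hd
    simpa [mul_assoc, transvection_mul_neg] using mul_mem (key _ hd) (h10 (-1))
  · exact key M hc

end Matrix.SpecialLinearGroup

namespace Gamma0p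

open Matrix Function

section Residue

def zmultiplesPow (p : ℕ) (k : ℤ) : AddSubgroup ℚ := AddSubgroup.zmultiples ((p : ℚ) ^ k)

lemma mem_zmultiplesPow {p : ℕ} {k : ℤ} {x : ℚ} :
    x ∈ zmultiplesPow p k ↔ ∃ n : ℤ, x = (p : ℚ) ^ k * n := by
  simp only [zmultiplesPow, AddSubgroup.mem_zmultiples_iff, zsmul_eq_mul, eq_comm, mul_comm]

lemma intCast_mem_zmultiplesPow_zero {p : ℕ} (n : ℤ) : (n : ℚ) ∈ zmultiplesPow p 0 :=
  mem_zmultiplesPow.2 ⟨n, by simp⟩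

lemma one_mem_zmultiplesPow_zero {p : ℕ} : (1 : ℚ) ∈ zmultiplesPow p 0 := by
  simpa using intCast_mem_zmultiplesPow_zero (p := p) 1

lemma isIntegerEntry_iff_mem {p : ℕ} {x : ℚ} : IsIntegerEntry x ↔ x ∈ zmultiplesPow p 0 := by
  simp [IsIntegerEntry, mem_zmultiplesPow]

lemma mem_zmultiplesPow_one {p : ℕ} {x : ℚ} : x ∈ zmultiplesPow p 1 ↔ ∃ n : ℤ, x = p * n := by
  simp [mem_zmultiplesPow]

lemma mem_zmultiplesPow_two {p : ℕ} {x : ℚ} :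
    x ∈ zmultiplesPow p 2 ↔ ∃ n : ℤ, x = (p : ℚ) ^ 2 * n := by
  simp [mem_zmultiplesPow]

lemma mem_zmultiplesPow_neg_one {p : ℕ} {x : ℚ} :
    x ∈ zmultiplesPow p (-1) ↔ ∃ n : ℤ, x = n / p := by
  simp [mem_zmultiplesPow, div_eq_inv_mul]

variable {p : ℕ} [NeZero p] {k l : ℤ} {x y : ℚ}

lemma zmultiplesPow_antitone (hkl : k ≤ l) : zmultiplesPow p l ≤ zmultiplesPow p k := by
  rw [zmultiplesPow, AddSubgroup.zmultiples_le, mem_zmultiplesPow]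
  obtain ⟨m, hm⟩ := Int.eq_ofNat_of_zero_le (sub_nonneg.2 hkl)
  refine ⟨(p : ℤ) ^ m, ?_⟩
  rw [show l = k + m by omega, zpow_add₀ (NeZero.ne _), zpow_natCast]
  push_cast; ring

lemma mul_mem_zmultiplesPow (hx : x ∈ zmultiplesPow p k) (hy : y ∈ zmultiplesPow p l) :
    x * y ∈ zmultiplesPow p (k + l) := by
  obtain ⟨n, rfl⟩ := mem_zmultiplesPow.1 hx
  obtain ⟨m, rfl⟩ := mem_zmultiplesPow.1 hy
  exact mem_zmultiplesPow.2 ⟨n * m, by rw [zpow_add₀ (NeZero.ne _)]; push_cast; ring⟩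

/-- The digit of `x` at `p ^ k`, i.e. `x / p ^ k` mod `p`; meaningful for `x ∈ p^k ℤ`. -/
def residue (p : ℕ) (k : ℤ) (x : ℚ) : ZMod p := ((x / (p : ℚ) ^ k).num : ZMod p)

lemma residue_zpow_mul (n : ℤ) : residue p k ((p : ℚ) ^ k * n) = n := by
  rw [residue, mul_div_cancel_left₀ _ (zpow_ne_zero k (Nat.cast_ne_zero.2 (NeZero.ne p)))]
  simp

lemma residue_one : residue p 0 1 = 1 := by
  simpa using residue_zpow_mul (p := p) (k := 0) 1

lemma residue_add (hx : x ∈ zmultiplesPow p k) (hy : y ∈ zmultiplesPow p k) :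
    residue p k (x + y) = residue p k x + residue p k y := by
  obtain ⟨n, rfl⟩ := mem_zmultiplesPow.1 hx
  obtain ⟨m, rfl⟩ := mem_zmultiplesPow.1 hy
  rw [← mul_add, ← Int.cast_add, residue_zpow_mul, residue_zpow_mul, residue_zpow_mul,
    Int.cast_add]

lemma residue_sub (hx : x ∈ zmultiplesPow p k) (hy : y ∈ zmultiplesPow p k) :
    residue p k (x - y) = residue p k x - residue p k y := by
  rw [eq_sub_iff_add_eq, ← residue_add (sub_mem hx hy) hy, sub_add_cancel]

lemma residue_sum {ι : Type*} (s : Finset ι) (f : ι → ℚ) (hf : ∀ i ∈ s, f i ∈ zmultiplesPow p k) :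
    residue p k (∑ i ∈ s, f i) = ∑ i ∈ s, residue p k (f i) := by
  induction s using Finset.cons_induction with
  | empty => simp [residue]
  | cons a s ha ih =>
    rw [Finset.forall_mem_cons] at hf
    rw [Finset.sum_cons, Finset.sum_cons, residue_add hf.1 (sum_mem hf.2), ih hf.2]

lemma residue_mul (hx : x ∈ zmultiplesPow p k) (hy : y ∈ zmultiplesPow p l) :
    residue p (k + l) (x * y) = residue p k x * residue p l y := by
  obtain ⟨n, rfl⟩ := mem_zmultiplesPow.1 hx
  obtain ⟨m, rfl⟩ := mem_zmultiplesPow.1 hy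
  rw [show (p : ℚ) ^ k * n * ((p : ℚ) ^ l * m) = (p : ℚ) ^ (k + l) * ((n * m : ℤ) : ℚ) by
    rw [zpow_add₀ (NeZero.ne _)]; push_cast; ring]
  rw [residue_zpow_mul, residue_zpow_mul, residue_zpow_mul, Int.cast_mul]

lemma residue_eq_zero_iff (hx : x ∈ zmultiplesPow p k) :
    residue p k x = 0 ↔ x ∈ zmultiplesPow p (k + 1) := by
  obtain ⟨n, rfl⟩ := mem_zmultiplesPow.1 hx
  rw [residue_zpow_mul, ZMod.intCast_zmod_eq_zero_iff_dvd, mem_zmultiplesPow]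
  constructor
  · rintro ⟨m, rfl⟩
    exact ⟨m, by rw [zpow_add_one₀ (NeZero.ne _)]; push_cast; ring⟩
  · rintro ⟨m, hm⟩
    refine ⟨m, ?_⟩
    rw [zpow_add_one₀ (NeZero.ne _), mul_assoc] at hm
    exact_mod_cast mul_left_cancel₀ (zpow_ne_zero _ (NeZero.ne _)) hm

lemma residue_eq_zero_of_lt (hx : x ∈ zmultiplesPow p l) (hkl : k < l) : residue p k x = 0 :=
  (residue_eq_zero_iff (zmultiplesPow_antitone hkl.le hx)).2 (zmultiplesPow_antitone hkl hx)

end Residue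

section Pattern

variable {n m : Type*} {p : ℕ} [NeZero p] {w : n → n → ℤ} {γ δ : Matrix n n ℚ}

def EntriesIn (p : ℕ) (w : n → n → ℤ) (γ : Matrix n n ℚ) : Prop :=
  ∀ i j, γ i j ∈ zmultiplesPow p (w i j)

lemma EntriesIn.mul [Fintype n] (hw : ∀ i j k, w i j ≤ w i k + w k j) (hγ : EntriesIn p w γ)
    (hδ : EntriesIn p w δ) : EntriesIn p w (γ * δ) := fun i j =>
  sum_mem fun k _ => zmultiplesPow_antitone (hw i j k) (mul_mem_zmultiplesPow (hγ i k) (hδ k j))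

lemma entriesIn_one [DecidableEq n] (hw : ∀ i, w i i ≤ 0) : EntriesIn p w 1 := by
  intro i j
  rcases eq_or_ne i j with rfl | hij
  · simpa using zmultiplesPow_antitone (hw i) one_mem_zmultiplesPow_zero
  · simp [hij, zero_mem]

lemma entriesIn_transvection [DecidableEq n] (hw : ∀ i, w i i ≤ 0) {i j : n} {c : ℚ}
    (hc : c ∈ zmultiplesPow p (w i j)) : EntriesIn p w (transvection i j c) := by
  intro a b
  refine add_mem (entriesIn_one hw a b) ?_
  rw [single_apply]
  split_ifs with h
  · obtain ⟨rfl, rfl⟩ := h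
    exact hc
  · exact zero_mem _

def leadingBlock (p : ℕ) (w : n → n → ℤ) (e : m → n) (γ : Matrix n n ℚ) : Matrix m m (ZMod p) :=
  Matrix.of fun a b => residue p (w (e a) (e b)) (γ (e a) (e b))

lemma leadingBlock_mul [Fintype n] [Fintype m] {e : m → n} (he : Injective e)
    (hw : ∀ i j k, w i j ≤ w i k + w k j)
    (hadd : ∀ a b c, w (e a) (e b) = w (e a) (e c) + w (e c) (e b))
    (hlt : ∀ a b k, (∀ c, e c ≠ k) → w (e a) (e b) < w (e a) k + w k (e b))
    (hγ : EntriesIn p w γ) (hδ : EntriesIn p w δ) :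
    leadingBlock p w e (γ * δ) = leadingBlock p w e γ * leadingBlock p w e δ := by
  ext a b
  have hterm (k : n) := mul_mem_zmultiplesPow (hγ (e a) k) (hδ k (e b))
  simp only [leadingBlock, Matrix.of_apply, Matrix.mul_apply]
  rw [residue_sum _ _ fun k _ => zmultiplesPow_antitone (hw _ _ k) (hterm k)]
  refine (Fintype.sum_of_injective e he _ _ (fun k hk => ?_) fun c => ?_).symm
  · exact residue_eq_zero_of_lt (hterm k) (hlt a b k fun c hc => hk ⟨c, hc⟩)
  · rw [hadd a b c, residue_mul (hγ _ _) (hδ _ _)]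

omit [NeZero p] in
lemma one_apply_mem_zmultiplesPow [DecidableEq n] {e : m → n} (he : Injective e)
    (hdiag : ∀ a, w (e a) (e a) = 0) (a b : m) :
    (1 : Matrix n n ℚ) (e a) (e b) ∈ zmultiplesPow p (w (e a) (e b)) := by
  rcases eq_or_ne a b with rfl | hab
  · simpa [hdiag] using one_mem_zmultiplesPow_zero
  · simp [he.ne hab, zero_mem]

lemma residue_one_apply [DecidableEq n] [DecidableEq m] {e : m → n} (he : Injective e)
    (hdiag : ∀ a, w (e a) (e a) = 0) (a b : m) :
    residue p (w (e a) (e b)) ((1 : Matrix n n ℚ) (e a) (e b)) = (1 : Matrix m m (ZMod p)) a b := by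
  rcases eq_or_ne a b with rfl | hab
  · simp [hdiag, residue_one]
  · simp [he.ne hab, hab, residue]

lemma leadingBlock_eq_one_iff [DecidableEq n] [DecidableEq m] {e : m → n} (he : Injective e)
    (hdiag : ∀ a, w (e a) (e a) = 0) (hγ : EntriesIn p w γ) :
    leadingBlock p w e γ = 1 ↔
      ∀ a b, (γ - 1) (e a) (e b) ∈ zmultiplesPow p (w (e a) (e b) + 1) := by
  rw [← Matrix.ext_iff]
  refine forall₂_congr fun a b => ?_
  have h1 := one_apply_mem_zmultiplesPow (p := p) he hdiag a b
  rw [Matrix.sub_apply, ← residue_eq_zero_iff (sub_mem (hγ _ _) h1), residue_sub (hγ _ _) h1,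
    sub_eq_zero, leadingBlock, Matrix.of_apply, residue_one_apply he hdiag]

lemma leadingBlock_transvection [DecidableEq n] [DecidableEq m] {e : m → n} (he : Injective e)
    (hdiag : ∀ a, w (e a) (e a) = 0) {a b : m} {c : ℚ} (hc : c ∈ zmultiplesPow p (w (e a) (e b))) :
    leadingBlock p w e (Matrix.transvection (e a) (e b) c) =
      Matrix.transvection a b (residue p (w (e a) (e b)) c) := by
  ext a' b'
  simp only [leadingBlock, Matrix.of_apply, Matrix.transvection, Matrix.add_apply,
    Matrix.single_apply, he.eq_iff]
  rw [← residue_one_apply he hdiag]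
  split_ifs with h
  · obtain ⟨rfl, rfl⟩ := h
    exact residue_add (one_apply_mem_zmultiplesPow he hdiag a b) hc
  · rw [add_zero, add_zero]

end Pattern

section Gamma0

/-- `gamma0Exp i j = c j - c i + [i odd ∧ j even]` with `c = (0, 0, 0, 1)`: conjugating by
`diag(1, 1, 1, p)` makes `Γ⁰_{1,p}` integral and block upper triangular mod `p`. -/
def gamma0Exp : Fin 4 → Fin 4 → ℤ := !![0, 0, 0, 1; 1, 0, 1, 1; 0, 0, 0, 1; 0, -1, 0, 0]

def gamma1Exp : Fin 4 → Fin 4 → ℤ := !![0, 0, 0, 1; 1, 1, 1, 2; 0, 0, 0, 1; 0, 0, 0, 1]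

def blockIndex : Fin 2 → Fin 4 := ![1, 3]

lemma blockIndex_injective : Injective blockIndex := by decide

lemma gamma0Exp_le_add : ∀ i j k : Fin 4, gamma0Exp i j ≤ gamma0Exp i k + gamma0Exp k j := by decide

lemma gamma0Exp_diag : ∀ i : Fin 4, gamma0Exp i i = 0 := by decide

lemma gamma0Exp_le_swap :
    ∀ i j : Fin 4, gamma0Exp i j ≤ gamma0Exp (lagrangianSwap j) (lagrangianSwap i) := by decide

lemma gamma0Exp_block_add : ∀ a b c, gamma0Exp (blockIndex a) (blockIndex b) =
    gamma0Exp (blockIndex a) (blockIndex c) + gamma0Exp (blockIndex c) (blockIndex b) := by decide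

lemma gamma0Exp_block_lt : ∀ a b k, (∀ c, blockIndex c ≠ k) →
    gamma0Exp (blockIndex a) (blockIndex b) <
      gamma0Exp (blockIndex a) k + gamma0Exp k (blockIndex b) := by decide

lemma gamma1Exp_block : ∀ a b, gamma1Exp (blockIndex a) (blockIndex b) =
    gamma0Exp (blockIndex a) (blockIndex b) + 1 := by decide

lemma gamma1Exp_eq_or_mem_block : ∀ i j : Fin 4,
    gamma1Exp i j = gamma0Exp i j ∨ ∃ a b, i = blockIndex a ∧ j = blockIndex b := by decide

lemma gamma0Exp_le_gamma1Exp : ∀ i j : Fin 4, gamma0Exp i j ≤ gamma1Exp i j := by decide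

lemma gamma1Exp_nonneg : ∀ i j : Fin 4, 0 ≤ gamma1Exp i j := by decide

variable {p : ℕ} [NeZero p] {γ : Matrix (Fin 4) (Fin 4) ℚ}

lemma EntriesIn.sp4Inv {w : Fin 4 → Fin 4 → ℤ}
    (hw : ∀ i j, w i j ≤ w (lagrangianSwap j) (lagrangianSwap i)) (hγ : EntriesIn p w γ) :
    EntriesIn p w (sp4Inv γ) := by
  intro i j
  rw [sp4Inv_apply]
  have h := mul_mem_zmultiplesPow (intCast_mem_zmultiplesPow_zero (p := p)
    (sp4Sign i * sp4Sign j)) (hγ (lagrangianSwap j) (lagrangianSwap i))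
  rw [zero_add] at h
  exact zmultiplesPow_antitone (hw i j) h

lemma isSp4_transvection_blockIndex {a b : Fin 2} (hab : a ≠ b) (c : ℚ) :
    IsSp4 (transvection (blockIndex a) (blockIndex b) c) := by
  fin_cases a <;> fin_cases b <;> (try exact absurd rfl hab) <;>
    ext i j <;> fin_cases i <;> fin_cases j <;>
    simp [J4, blockIndex, transvection, mul_apply, Fin.sum_univ_four, single_apply,
      one_apply]

lemma gamma0pMem_iff : Gamma0pMem p γ ↔ IsSp4 γ ∧ EntriesIn p gamma0Exp γ := by
  simp only [Gamma0pMem, isIntegerEntry_iff_mem (p := p), ← mem_zmultiplesPow_one,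
    ← mem_zmultiplesPow_neg_one]
  refine and_congr_right fun _ => ⟨?_, fun h => ?_⟩
  · rintro ⟨hint, h03, h10, h12, h13, h23, h31⟩ i j
    fin_cases i <;> fin_cases j <;> first | exact hint _ _ (by decide) | assumption
  · have hnonneg : ∀ i j : Fin 4, (i, j) ≠ (3, 1) → 0 ≤ gamma0Exp i j := by decide
    exact ⟨fun i j hij => zmultiplesPow_antitone (hnonneg i j hij) (h i j),
      h 0 3, h 1 0, h 1 2, h 1 3, h 2 3, h 3 1⟩

lemma gamma1pMem_iff : Gamma1pMem p γ ↔ IsSp4 γ ∧ EntriesIn p gamma1Exp (γ - 1) := by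
  simp only [Gamma1pMem, isIntegerEntry_iff_mem (p := p), ← mem_zmultiplesPow_one,
    ← mem_zmultiplesPow_two]
  have hone : EntriesIn p (fun _ _ => 0) (1 : Matrix (Fin 4) (Fin 4) ℚ) :=
    entriesIn_one fun _ => le_rfl
  refine and_congr_right fun _ => ⟨?_, fun h => ?_⟩
  · rintro ⟨hint, h03, h10, h11, h12, h13, h23, h33⟩ i j
    fin_cases i <;> fin_cases j <;> first | assumption | exact sub_mem (hint _ _) (hone _ _)
  · refine ⟨fun i j => ?_, h 0 3, h 1 0, h 1 1, h 1 2, h 1 3, h 2 3, h 3 3⟩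
    simpa using add_mem (zmultiplesPow_antitone (gamma1Exp_nonneg i j) (h i j)) (hone i j)

lemma entriesIn_gamma0Exp_one : EntriesIn p gamma0Exp 1 :=
  entriesIn_one fun i => (gamma0Exp_diag i).le

lemma entriesIn_gamma1Exp_sub_one_iff : EntriesIn p gamma1Exp (γ - 1) ↔
    EntriesIn p gamma0Exp γ ∧ ∀ a b, (γ - 1) (blockIndex a) (blockIndex b) ∈
      zmultiplesPow p (gamma0Exp (blockIndex a) (blockIndex b) + 1) := by
  refine ⟨fun h => ⟨fun i j => ?_, fun a b => ?_⟩, fun ⟨h, hblock⟩ i j => ?_⟩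
  · simpa using add_mem (zmultiplesPow_antitone (gamma0Exp_le_gamma1Exp i j) (h i j))
      (entriesIn_gamma0Exp_one i j)
  · simpa only [gamma1Exp_block] using h (blockIndex a) (blockIndex b)
  · obtain h' | ⟨a, b, rfl, rfl⟩ := gamma1Exp_eq_or_mem_block i j
    · rw [h']
      exact sub_mem (h i j) (entriesIn_gamma0Exp_one i j)
    · rw [gamma1Exp_block]
      exact hblock a b

lemma gamma1pMem_iff_gamma0pMem_and :
    Gamma1pMem p γ ↔ Gamma0pMem p γ ∧ leadingBlock p gamma0Exp blockIndex γ = 1 := by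
  rw [gamma1pMem_iff, entriesIn_gamma1Exp_sub_one_iff, gamma0pMem_iff, and_assoc]
  refine and_congr_right fun _ => ⟨fun ⟨h, hblock⟩ => ⟨h, ?_⟩, fun ⟨h, hblock⟩ => ⟨h, ?_⟩⟩
  · exact (leadingBlock_eq_one_iff blockIndex_injective (fun _ => gamma0Exp_diag _) h).2 hblock
  · exact (leadingBlock_eq_one_iff blockIndex_injective (fun _ => gamma0Exp_diag _) h).1 hblock

lemma det_leadingBlock_gamma0Exp (hsp : IsSp4 γ) (h : EntriesIn p gamma0Exp γ) :
    (leadingBlock p gamma0Exp blockIndex γ).det = 1 := by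
  have hsp13 : γ 1 0 * γ 3 2 + γ 1 1 * γ 3 3 - γ 1 2 * γ 3 0 - γ 1 3 * γ 3 1 = 1 := by
    have := congrFun₂ hsp 1 3
    simp [J4, mul_apply, Fin.sum_univ_four] at this
    linarith
  have h10 : γ 1 0 ∈ zmultiplesPow p 1 := h 1 0
  have h11 : γ 1 1 ∈ zmultiplesPow p 0 := h 1 1
  have h12 : γ 1 2 ∈ zmultiplesPow p 1 := h 1 2
  have h13 : γ 1 3 ∈ zmultiplesPow p 1 := h 1 3
  have h30 : γ 3 0 ∈ zmultiplesPow p 0 := h 3 0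
  have h31 : γ 3 1 ∈ zmultiplesPow p (-1) := h 3 1
  have h32 : γ 3 2 ∈ zmultiplesPow p 0 := h 3 2
  have h33 : γ 3 3 ∈ zmultiplesPow p 0 := h 3 3
  have h1133 : γ 1 1 * γ 3 3 ∈ zmultiplesPow p 0 := mul_mem_zmultiplesPow h11 h33
  have h1331 : γ 1 3 * γ 3 1 ∈ zmultiplesPow p 0 := mul_mem_zmultiplesPow h13 h31
  have hsmall : γ 1 0 * γ 3 2 - γ 1 2 * γ 3 0 ∈ zmultiplesPow p 1 :=
    sub_mem (mul_mem_zmultiplesPow h10 h32) (mul_mem_zmultiplesPow h12 h30)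
  have hmain : γ 1 1 * γ 3 3 - γ 1 3 * γ 3 1 = 1 - (γ 1 0 * γ 3 2 - γ 1 2 * γ 3 0) := by
    linarith
  have hdiag : residue p 0 (γ 1 1 * γ 3 3) = residue p 0 (γ 1 1) * residue p 0 (γ 3 3) :=
    residue_mul h11 h33
  have hanti : residue p 0 (γ 1 3 * γ 3 1) = residue p 1 (γ 1 3) * residue p (-1) (γ 3 1) :=
    residue_mul h13 h31
  rw [det_fin_two]
  change residue p 0 (γ 1 1) * residue p 0 (γ 3 3) -
    residue p 1 (γ 1 3) * residue p (-1) (γ 3 1) = 1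
  rw [← hdiag, ← hanti, ← residue_sub h1133 h1331, hmain,
    residue_sub one_mem_zmultiplesPow_zero (zmultiplesPow_antitone zero_le_one hsmall),
    residue_one, residue_eq_zero_of_lt hsmall zero_lt_one, sub_zero]

end Gamma0

variable (p : ℕ) [NeZero p]

def gamma0 : Subgroup (GL (Fin 4) ℚ) where
  carrier := {g | Gamma0pMem p g}
  mul_mem' {g h} hg hh := by
    obtain ⟨hg, hg'⟩ := gamma0pMem_iff.1 hg
    obtain ⟨hh, hh'⟩ := gamma0pMem_iff.1 hh
    exact gamma0pMem_iff.2 ⟨hg.mul hh, hg'.mul gamma0Exp_le_add hh'⟩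
  one_mem' := gamma0pMem_iff.2 ⟨isSp4_one, entriesIn_gamma0Exp_one⟩
  inv_mem' {g} hg := by
    obtain ⟨hsp, hg⟩ := gamma0pMem_iff.1 hg
    change Gamma0pMem p _
    rw [coe_inv_eq_sp4Inv hsp]
    exact gamma0pMem_iff.2 ⟨isSp4_sp4Inv hsp, hg.sp4Inv gamma0Exp_le_swap⟩

def gamma0Reduction : gamma0 p →* SpecialLinearGroup (Fin 2) (ZMod p) where
  toFun g := ⟨leadingBlock p gamma0Exp blockIndex (g : GL (Fin 4) ℚ),
    det_leadingBlock_gamma0Exp (gamma0pMem_iff.1 g.2).1 (gamma0pMem_iff.1 g.2).2⟩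
  map_one' := Subtype.ext <| (leadingBlock_eq_one_iff blockIndex_injective
    (fun _ => gamma0Exp_diag _) entriesIn_gamma0Exp_one).2 fun a b => by simp [zero_mem]
  map_mul' g h := Subtype.ext <| leadingBlock_mul blockIndex_injective gamma0Exp_le_add
    gamma0Exp_block_add gamma0Exp_block_lt (gamma0pMem_iff.1 g.2).2 (gamma0pMem_iff.1 h.2).2

lemma transvection_mem_range_gamma0Reduction {a b : Fin 2} (hab : a ≠ b) (x : ZMod p) :
    SpecialLinearGroup.transvection hab x ∈ (gamma0Reduction p).range := by
  set c : ℚ := (p : ℚ) ^ gamma0Exp (blockIndex a) (blockIndex b) * ((x.val : ℤ) : ℚ)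
  have hc : c ∈ zmultiplesPow p (gamma0Exp (blockIndex a) (blockIndex b)) :=
    mem_zmultiplesPow.2 ⟨_, rfl⟩
  have hsp := isSp4_transvection_blockIndex hab c
  have hmem := gamma0pMem_iff.2 ⟨hsp, entriesIn_transvection (fun i => (gamma0Exp_diag i).le) hc⟩
  refine ⟨⟨hsp.toGL, hmem⟩, Subtype.ext ?_⟩
  change leadingBlock p gamma0Exp blockIndex (transvection (blockIndex a) (blockIndex b) c) =
    transvection a b x
  rw [leadingBlock_transvection blockIndex_injective (fun _ => gamma0Exp_diag _) hc,
    residue_zpow_mul]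
  simp

lemma gamma0Reduction_surjective [Fact p.Prime] : Surjective (gamma0Reduction p) := fun M =>
  SpecialLinearGroup.fin_two_mem_of_transvection_mem (H := (gamma0Reduction p).range)
    (transvection_mem_range_gamma0Reduction p _) (transvection_mem_range_gamma0Reduction p _) M

end Gamma0p

open Gamma0p in
theorem statement1_general (p : ℕ) (hp : p.Prime) :
    ∃ G0 Γ : Subgroup (GL (Fin 4) ℚ),
      (∀ g : GL (Fin 4) ℚ, g ∈ G0 ↔ Gamma0pMem p ↑g) ∧
      (∀ g : GL (Fin 4) ℚ, g ∈ Γ ↔ Gamma1pMem p ↑g) ∧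
      Γ ≤ G0 ∧ (Γ.subgroupOf G0).Normal ∧
      ∃ f : G0 →* Matrix.SpecialLinearGroup (Fin 2) (ZMod p),
        Function.Surjective f ∧ f.ker = Γ.subgroupOf G0 := by
  have := Fact.mk hp
  have hker : ((gamma0Reduction p).ker.map (gamma0 p).subtype).subgroupOf (gamma0 p) =
      (gamma0Reduction p).ker :=
    Subgroup.comap_map_eq_self_of_injective (gamma0 p).subtype_injective _
  refine ⟨gamma0 p, (gamma0Reduction p).ker.map (gamma0 p).subtype, fun g => Iff.rfl,
    fun g => ?_, Subgroup.map_subtype_le _, by rw [hker]; exact (gamma0Reduction p).normal_ker,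
    gamma0Reduction p, gamma0Reduction_surjective p, hker.symm⟩
  rw [gamma1pMem_iff_gamma0pMem_and]
  constructor
  · rintro ⟨g, hg, rfl⟩
    exact ⟨g.2, congrArg Subtype.val hg⟩
  · rintro ⟨hg, hg1⟩
    exact ⟨⟨g, hg⟩, Subtype.ext hg1, rfl⟩

/-- `Γ_{1,p}` is a normal subgroup of `Γ⁰_{1,p}` with quotient isomorphic to
`SL(2, F_p)`. -/
theorem statement1 (p : ℕ) (hp : p.Prime) (hodd : Odd p) :
    ∃ G0 Γ : Subgroup (GL (Fin 4) ℚ),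
      (∀ g : GL (Fin 4) ℚ, g ∈ G0 ↔ Gamma0pMem p ↑g) ∧
      (∀ g : GL (Fin 4) ℚ, g ∈ Γ ↔ Gamma1pMem p ↑g) ∧
      Γ ≤ G0 ∧ (Γ.subgroupOf G0).Normal ∧
      ∃ f : G0 →* Matrix.SpecialLinearGroup (Fin 2) (ZMod p),
        Function.Surjective f ∧ f.ker = Γ.subgroupOf G0 :=
  statement1_general p hp
end

section
/- With R = diag(1,1,1,p) ∈ GL(4,ℚ), one has Γ̃_{1,p} = R · Γ_{1,p} · R⁻¹; that is, a 4×4 rational matrix K lies in Γ̃_{1,p} if and only if R⁻¹ K R lies in Γ_{1,p}. -/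
open Matrix

/-- The symplectic form `Λ` (over `ℚ`). -/
def Lambda4 (p : ℕ) : Matrix (Fin 4) (Fin 4) ℚ :=
  !![0,0,1,0; 0,0,0,(p:ℚ); -1,0,0,0; 0,-(p:ℚ),0,0]

/-- Membership in `Γ̃_{1,p} ⊆ Sp(Λ,ℤ)`: an integer matrix `γ` with `γ Λ γᵀ = Λ` whose second
row is congruent to `(0,1,0,0)` and whose fourth row is congruent to `(0,0,0,1)` mod `p`. -/
def TildeGammaQMem (p : ℕ) (γ : Matrix (Fin 4) (Fin 4) ℚ) : Prop :=
  (∀ i j, IsIntegerEntry (γ i j)) ∧ γ * Lambda4 p * γ.transpose = Lambda4 p ∧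
  (∃ n : ℤ, γ 1 0 = p * n) ∧ (∃ n : ℤ, γ 1 1 - 1 = p * n) ∧
  (∃ n : ℤ, γ 1 2 = p * n) ∧ (∃ n : ℤ, γ 1 3 = p * n) ∧
  (∃ n : ℤ, γ 3 0 = p * n) ∧ (∃ n : ℤ, γ 3 1 = p * n) ∧
  (∃ n : ℤ, γ 3 2 = p * n) ∧ (∃ n : ℤ, γ 3 3 - 1 = p * n)

lemma aux_RE (p : ℕ) (hp0 : (p:ℚ) ≠ 0) :
    (Matrix.diagonal ![1,1,1,(p:ℚ)]) * (Matrix.diagonal ![1,1,1,(p:ℚ)⁻¹]) = 1 := by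
  rw [Matrix.diagonal_mul_diagonal]
  ext i j
  fin_cases i <;> fin_cases j <;>
    simp [Matrix.diagonal_apply, Matrix.one_apply, Matrix.vecHead, Matrix.vecTail, hp0]

lemma aux_ER (p : ℕ) (hp0 : (p:ℚ) ≠ 0) :
    (Matrix.diagonal ![1,1,1,(p:ℚ)⁻¹]) * (Matrix.diagonal ![1,1,1,(p:ℚ)]) = 1 := by
  rw [Matrix.diagonal_mul_diagonal]
  ext i j
  fin_cases i <;> fin_cases j <;>
    simp [Matrix.diagonal_apply, Matrix.one_apply, Matrix.vecHead, Matrix.vecTail, hp0]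

lemma aux_RJR (p : ℕ) :
    (Matrix.diagonal ![1,1,1,(p:ℚ)]) * J4 * (Matrix.diagonal ![1,1,1,(p:ℚ)]) = Lambda4 p := by
  ext i j
  rw [Matrix.mul_diagonal, Matrix.diagonal_mul]
  fin_cases i <;> fin_cases j <;>
    simp [J4, Lambda4, Matrix.vecHead, Matrix.vecTail]

lemma aux_ELE (p : ℕ) (hp0 : (p:ℚ) ≠ 0) :
    (Matrix.diagonal ![1,1,1,(p:ℚ)⁻¹]) * Lambda4 p * (Matrix.diagonal ![1,1,1,(p:ℚ)⁻¹]) = J4 := by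
  ext i j
  rw [Matrix.mul_diagonal, Matrix.diagonal_mul]
  fin_cases i <;> fin_cases j <;>
    simp [J4, Lambda4, Matrix.vecHead, Matrix.vecTail] <;> field_simp

lemma aux_entry (p : ℕ) (K : Matrix (Fin 4) (Fin 4) ℚ) (i j : Fin 4) :
    ((Matrix.diagonal ![1,1,1,(p:ℚ)⁻¹]) * K * (Matrix.diagonal ![1,1,1,(p:ℚ)])) i j
      = ![1,1,1,(p:ℚ)⁻¹] i * K i j * ![1,1,1,(p:ℚ)] j := by
  rw [Matrix.mul_diagonal, Matrix.diagonal_mul]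

lemma aux_symp (p : ℕ) (hp0 : (p:ℚ) ≠ 0) (K : Matrix (Fin 4) (Fin 4) ℚ) :
    K * Lambda4 p * K.transpose = Lambda4 p ↔
      IsSp4 ((Matrix.diagonal ![1,1,1,(p:ℚ)⁻¹]) * K * (Matrix.diagonal ![1,1,1,(p:ℚ)])) := by
  set R : Matrix (Fin 4) (Fin 4) ℚ := Matrix.diagonal ![1,1,1,(p:ℚ)] with hRdef
  set E : Matrix (Fin 4) (Fin 4) ℚ := Matrix.diagonal ![1,1,1,(p:ℚ)⁻¹] with hEdef
  have hRt : R.transpose = R := by rw [hRdef]; exact Matrix.diagonal_transpose _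
  have hEt : E.transpose = E := by rw [hEdef]; exact Matrix.diagonal_transpose _
  have hRE : R * E = 1 := aux_RE p hp0
  have hRJR : R * J4 * R = Lambda4 p := aux_RJR p
  have hELE : E * Lambda4 p * E = J4 := aux_ELE p hp0
  unfold IsSp4
  constructor
  · intro h
    have key : (E*K*R) * J4 * (E*K*R).transpose = E * (K * Lambda4 p * K.transpose) * E := by
      rw [Matrix.transpose_mul, Matrix.transpose_mul, hRt, hEt, ← hRJR]
      simp only [Matrix.mul_assoc]
    rw [key, h, hELE]
  · intro h
    have hK : K = R * (E*K*R) * E := by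
      calc K = 1 * K * 1 := by rw [one_mul, mul_one]
      _ = (R*E) * K * (R*E) := by rw [hRE]
      _ = R * (E*K*R) * E := by simp only [Matrix.mul_assoc]
    have key : K * Lambda4 p * K.transpose
        = R * ((E*K*R) * J4 * (E*K*R).transpose) * R := by
      conv_lhs => rw [hK]
      rw [Matrix.transpose_mul, Matrix.transpose_mul, Matrix.transpose_mul,
        Matrix.transpose_mul, hRt, hEt, ← hELE]
      simp only [Matrix.mul_assoc]
    rw [key, h, hRJR]

/-- with `R = diag(1,1,1,p)`, a rational `4×4` matrix `K` lies in `Γ̃_{1,p}`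
if and only if `R⁻¹ K R` lies in `Γ_{1,p}`. -/
theorem statement2 (p : ℕ) (hp : p.Prime) (hodd : Odd p)
    (K : Matrix (Fin 4) (Fin 4) ℚ) :
    TildeGammaQMem p K ↔
      Gamma1pMem p ((Matrix.diagonal ![1,1,1,(p:ℚ)])⁻¹ * K * Matrix.diagonal ![1,1,1,(p:ℚ)]) := by
  have hp0 : (p:ℚ) ≠ 0 := Nat.cast_ne_zero.mpr hp.ne_zero
  rw [show (Matrix.diagonal ![1,1,1,(p:ℚ)])⁻¹ = Matrix.diagonal ![1,1,1,(p:ℚ)⁻¹] from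
    Matrix.inv_eq_right_inv (aux_RE p hp0)]
  have hG := aux_entry p K
  have g00 : ((Matrix.diagonal ![1,1,1,(p:ℚ)⁻¹]) * K * (Matrix.diagonal ![1,1,1,(p:ℚ)])) 0 0
      = K 0 0 := by rw [hG]; norm_num [Matrix.vecHead, Matrix.vecTail]
  have g01 : ((Matrix.diagonal ![1,1,1,(p:ℚ)⁻¹]) * K * (Matrix.diagonal ![1,1,1,(p:ℚ)])) 0 1
      = K 0 1 := by rw [hG]; norm_num [Matrix.vecHead, Matrix.vecTail]
  have g02 : ((Matrix.diagonal ![1,1,1,(p:ℚ)⁻¹]) * K * (Matrix.diagonal ![1,1,1,(p:ℚ)])) 0 2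
      = K 0 2 := by rw [hG]; simp
  have g03 : ((Matrix.diagonal ![1,1,1,(p:ℚ)⁻¹]) * K * (Matrix.diagonal ![1,1,1,(p:ℚ)])) 0 3
      = K 0 3 * p := by rw [hG]; simp
  have g10 : ((Matrix.diagonal ![1,1,1,(p:ℚ)⁻¹]) * K * (Matrix.diagonal ![1,1,1,(p:ℚ)])) 1 0
      = K 1 0 := by rw [hG]; norm_num [Matrix.vecHead, Matrix.vecTail]
  have g11 : ((Matrix.diagonal ![1,1,1,(p:ℚ)⁻¹]) * K * (Matrix.diagonal ![1,1,1,(p:ℚ)])) 1 1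
      = K 1 1 := by rw [hG]; norm_num [Matrix.vecHead, Matrix.vecTail]
  have g12 : ((Matrix.diagonal ![1,1,1,(p:ℚ)⁻¹]) * K * (Matrix.diagonal ![1,1,1,(p:ℚ)])) 1 2
      = K 1 2 := by rw [hG]; simp
  have g13 : ((Matrix.diagonal ![1,1,1,(p:ℚ)⁻¹]) * K * (Matrix.diagonal ![1,1,1,(p:ℚ)])) 1 3
      = K 1 3 * p := by rw [hG]; simp
  have g20 : ((Matrix.diagonal ![1,1,1,(p:ℚ)⁻¹]) * K * (Matrix.diagonal ![1,1,1,(p:ℚ)])) 2 0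
      = K 2 0 := by rw [hG]; simp
  have g21 : ((Matrix.diagonal ![1,1,1,(p:ℚ)⁻¹]) * K * (Matrix.diagonal ![1,1,1,(p:ℚ)])) 2 1
      = K 2 1 := by rw [hG]; simp
  have g22 : ((Matrix.diagonal ![1,1,1,(p:ℚ)⁻¹]) * K * (Matrix.diagonal ![1,1,1,(p:ℚ)])) 2 2
      = K 2 2 := by rw [hG]; simp
  have g23 : ((Matrix.diagonal ![1,1,1,(p:ℚ)⁻¹]) * K * (Matrix.diagonal ![1,1,1,(p:ℚ)])) 2 3
      = K 2 3 * p := by rw [hG]; simp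
  have g30 : ((Matrix.diagonal ![1,1,1,(p:ℚ)⁻¹]) * K * (Matrix.diagonal ![1,1,1,(p:ℚ)])) 3 0
      = (p:ℚ)⁻¹ * K 3 0 := by rw [hG]; simp
  have g31 : ((Matrix.diagonal ![1,1,1,(p:ℚ)⁻¹]) * K * (Matrix.diagonal ![1,1,1,(p:ℚ)])) 3 1
      = (p:ℚ)⁻¹ * K 3 1 := by rw [hG]; simp
  have g32 : ((Matrix.diagonal ![1,1,1,(p:ℚ)⁻¹]) * K * (Matrix.diagonal ![1,1,1,(p:ℚ)])) 3 2
      = (p:ℚ)⁻¹ * K 3 2 := by rw [hG]; simp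
  have g33 : ((Matrix.diagonal ![1,1,1,(p:ℚ)⁻¹]) * K * (Matrix.diagonal ![1,1,1,(p:ℚ)])) 3 3
      = (p:ℚ)⁻¹ * K 3 3 * p := by rw [hG]; rfl
  have hcan : (p:ℚ)⁻¹ * K 3 3 * p = K 3 3 := by
    rw [mul_comm ((p:ℚ)⁻¹) (K 3 3), mul_assoc, inv_mul_cancel₀ hp0, mul_one]
  constructor
  · rintro ⟨hint, hsp, ⟨n10,h10⟩, ⟨n11,h11⟩, ⟨n12,h12⟩, ⟨n13,h13⟩,
      ⟨n30,h30⟩, ⟨n31,h31⟩, ⟨n32,h32⟩, ⟨n33,h33⟩⟩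
    refine ⟨(aux_symp p hp0 K).mp hsp, ?_, ?_, ?_, ?_, ?_, ?_, ?_, ?_⟩
    · -- integrality of the conjugated matrix
      intro i j
      rw [hG]
      fin_cases i <;> fin_cases j <;> simp [Matrix.vecHead, Matrix.vecTail] <;>
        first
          | exact hint _ _
          | (obtain ⟨m, hm⟩ := hint 0 3; exact ⟨m * p, by rw [hm]; push_cast; ring⟩)
          | (obtain ⟨m, hm⟩ := hint 1 3; exact ⟨m * p, by rw [hm]; push_cast; ring⟩)
          | (obtain ⟨m, hm⟩ := hint 2 3; exact ⟨m * p, by rw [hm]; push_cast; ring⟩)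
          | exact ⟨n30, by rw [h30, ← mul_assoc, inv_mul_cancel₀ hp0, one_mul]⟩
          | exact ⟨n31, by rw [h31, ← mul_assoc, inv_mul_cancel₀ hp0, one_mul]⟩
          | exact ⟨n32, by rw [h32, ← mul_assoc, inv_mul_cancel₀ hp0, one_mul]⟩
          | (obtain ⟨m, hm⟩ := hint 3 3; exact ⟨m, by rw [hcan, hm]⟩)
    · obtain ⟨m, hm⟩ := hint 0 3
      exact ⟨m, by rw [Matrix.sub_apply, g03, hm]; simp [Matrix.one_apply]; try ring⟩
    · exact ⟨n10, by rw [Matrix.sub_apply, g10, h10]; simp [Matrix.one_apply]⟩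
    · exact ⟨n11, by rw [Matrix.sub_apply, g11]; simp only [Matrix.one_apply_eq]; exact h11⟩
    · exact ⟨n12, by rw [Matrix.sub_apply, g12, h12]; simp [Matrix.one_apply]⟩
    · exact ⟨n13, by rw [Matrix.sub_apply, g13, h13]; simp [Matrix.one_apply]; try ring⟩
    · obtain ⟨m, hm⟩ := hint 2 3
      exact ⟨m, by rw [Matrix.sub_apply, g23, hm]; simp [Matrix.one_apply]; try ring⟩
    · exact ⟨n33, by rw [Matrix.sub_apply, g33, hcan]; simp only [Matrix.one_apply_eq]; exact h33⟩
  · rintro ⟨hsp, hint, ⟨m03,h03⟩, ⟨m10,h10⟩, ⟨m11,h11⟩, ⟨m12,h12⟩, ⟨m13,h13⟩,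
      ⟨m23,h23⟩, ⟨m33,h33⟩⟩
    rw [Matrix.sub_apply, g03,
      Matrix.one_apply_ne (by decide : (0:Fin 4) ≠ 3), sub_zero] at h03
    rw [Matrix.sub_apply, g10,
      Matrix.one_apply_ne (by decide : (1:Fin 4) ≠ 0), sub_zero] at h10
    rw [Matrix.sub_apply, g11, Matrix.one_apply_eq] at h11
    rw [Matrix.sub_apply, g12,
      Matrix.one_apply_ne (by decide : (1:Fin 4) ≠ 2), sub_zero] at h12
    rw [Matrix.sub_apply, g13,
      Matrix.one_apply_ne (by decide : (1:Fin 4) ≠ 3), sub_zero] at h13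
    rw [Matrix.sub_apply, g23,
      Matrix.one_apply_ne (by decide : (2:Fin 4) ≠ 3), sub_zero] at h23
    rw [Matrix.sub_apply, g33, hcan, Matrix.one_apply_eq] at h33
    -- derived facts about the entries of K
    have k03 : K 0 3 = (m03 : ℚ) := by
      apply mul_right_cancel₀ hp0; rw [h03]; ring
    have k13 : K 1 3 = (p:ℚ) * m13 := by
      apply mul_right_cancel₀ hp0; rw [h13]; ring
    have k23 : K 2 3 = (m23 : ℚ) := by
      apply mul_right_cancel₀ hp0; rw [h23]; ring
    have k30 : ∃ m : ℤ, K 3 0 = (p:ℚ) * m := by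
      obtain ⟨m, hm⟩ := hint 3 0
      rw [g30] at hm
      refine ⟨m, ?_⟩
      have : (p:ℚ) * ((p:ℚ)⁻¹ * K 3 0) = (p:ℚ) * m := by rw [hm]
      rwa [← mul_assoc, mul_inv_cancel₀ hp0, one_mul] at this
    have k31 : ∃ m : ℤ, K 3 1 = (p:ℚ) * m := by
      obtain ⟨m, hm⟩ := hint 3 1
      rw [g31] at hm
      refine ⟨m, ?_⟩
      have : (p:ℚ) * ((p:ℚ)⁻¹ * K 3 1) = (p:ℚ) * m := by rw [hm]
      rwa [← mul_assoc, mul_inv_cancel₀ hp0, one_mul] at this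
    have k32 : ∃ m : ℤ, K 3 2 = (p:ℚ) * m := by
      obtain ⟨m, hm⟩ := hint 3 2
      rw [g32] at hm
      refine ⟨m, ?_⟩
      have : (p:ℚ) * ((p:ℚ)⁻¹ * K 3 2) = (p:ℚ) * m := by rw [hm]
      rwa [← mul_assoc, mul_inv_cancel₀ hp0, one_mul] at this
    have k33 : ∃ m : ℤ, K 3 3 = (m : ℚ) := by
      obtain ⟨m, hm⟩ := hint 3 3
      rw [g33, hcan] at hm
      exact ⟨m, hm⟩
    refine ⟨?_, (aux_symp p hp0 K).mpr hsp, ⟨m10, h10⟩, ⟨m11, h11⟩, ⟨m12, h12⟩,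
      ⟨m13, k13⟩, k30, k31, k32, ⟨m33, h33⟩⟩
    -- integrality of K
    intro i j
    fin_cases i <;> fin_cases j <;>
      first
        | (obtain ⟨m, hm⟩ := hint 0 0; exact ⟨m, g00.symm.trans hm⟩)
        | (obtain ⟨m, hm⟩ := hint 0 1; exact ⟨m, g01.symm.trans hm⟩)
        | (obtain ⟨m, hm⟩ := hint 0 2; exact ⟨m, g02.symm.trans hm⟩)
        | exact ⟨m03, k03⟩
        | (obtain ⟨m, hm⟩ := hint 1 0; exact ⟨m, g10.symm.trans hm⟩)
        | (obtain ⟨m, hm⟩ := hint 1 1; exact ⟨m, g11.symm.trans hm⟩)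
        | (obtain ⟨m, hm⟩ := hint 1 2; exact ⟨m, g12.symm.trans hm⟩)
        | exact ⟨p * m13, by show K 1 3 = ((p * m13 : ℤ) : ℚ); rw [k13]; push_cast; ring⟩
        | (obtain ⟨m, hm⟩ := hint 2 0; exact ⟨m, g20.symm.trans hm⟩)
        | (obtain ⟨m, hm⟩ := hint 2 1; exact ⟨m, g21.symm.trans hm⟩)
        | (obtain ⟨m, hm⟩ := hint 2 2; exact ⟨m, g22.symm.trans hm⟩)
        | exact ⟨m23, k23⟩
        | (obtain ⟨m, hm⟩ := k30; exact ⟨p * m, by show K 3 0 = ((p * m : ℤ) : ℚ); rw [hm]; push_cast; ring⟩)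
        | (obtain ⟨m, hm⟩ := k31; exact ⟨p * m, by show K 3 1 = ((p * m : ℤ) : ℚ); rw [hm]; push_cast; ring⟩)
        | (obtain ⟨m, hm⟩ := k32; exact ⟨p * m, by show K 3 2 = ((p * m : ℤ) : ℚ); rw [hm]; push_cast; ring⟩)
        | exact k33
end
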